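/- arXiv:1910.03906 — 2 statements merged into one kernel-verified Lean document; each statement's English description precedes it below -/
import Mathlib

section
/- Let V be an r×r symmetric matrix, μ an r-vector, and η > 0 with μᵀVμ + η ≠ 0. Then the Kalman covariance update (V⊗I_d) − (V⊗I_d)Hᵀ[H(V⊗I_d)Hᵀ + η I_d]⁻¹ H(V⊗I_d), with H = μᵀ ⊗ I_d, equals (V − (VμμᵀV)/(μᵀVμ + η)) ⊗ I_d. That is, the Kronecker-with-identity covariance structure is preserved under the Kalman update with observation matrix μᵀ ⊗ I_d and isotropic noise. -/
open Matrix Kronecker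

/-!
Both the Kalman update `P - P Hᵀ (H P Hᵀ + R)⁻¹ H P` and the operation `A ↦ A ⊗ I_d` are built from
products, sums, transposes and inverses, and `⊗ I_d` commutes with all four. So the update of
`V ⊗ I_d` by `μᵀ ⊗ I_d` and `η I_d` is the update of `V` by the row `μᵀ` and the scalar `η`, `⊗ I_d`.
That update is rank one: the innovation covariance is the `1 × 1` matrix `μᵀVμ + η`.
-/

namespace Matrix

variable {ι m n p : Type*}

theorem sub_kronecker {R : Type*} [Ring R] (A₁ A₂ : Matrix m n R) (B : Matrix ι p R) :
    (A₁ - A₂) ⊗ₖ B = A₁ ⊗ₖ B - A₂ ⊗ₖ B :=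
  ext fun _ _ => sub_mul _ _ _

variable {K : Type*} [Field K]

theorem inv_smul_one [Fintype m] [DecidableEq m] (c : K) :
    (c • (1 : Matrix m m K))⁻¹ = c⁻¹ • 1 := by
  rcases eq_or_ne c 0 with rfl | hc
  · -- both sides are `0`, through the junk values `(0 : Matrix m m K)⁻¹ = 0` and `(0 : K)⁻¹ = 0`
    simp
  · exact inv_eq_left_inv (by rw [smul_mul_smul, inv_mul_cancel₀ hc, one_smul, Matrix.mul_one])

theorem replicateRow_mul_mul_replicateCol [Fintype n] [Unique ι] [DecidableEq ι]
    (A : Matrix n n K) (μ ν : n → K) :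
    replicateRow ι μ * A * replicateCol ι ν = (μ ⬝ᵥ A *ᵥ ν) • 1 := by
  rw [Matrix.mul_assoc, ← replicateCol_mulVec, replicateRow_mul_replicateCol]
  ext i j
  simp [Subsingleton.elim i j]

end Matrix

section Kalman

variable {K : Type*} [Field K] {ι m n : Type*} [Fintype m] [Fintype n] [DecidableEq m]

noncomputable def kalmanCovUpdate (P : Matrix n n K) (H : Matrix m n K) (R : Matrix m m K) :
    Matrix n n K :=
  P - P * Hᵀ * (H * P * Hᵀ + R)⁻¹ * H * P

theorem kalmanCovUpdate_kronecker_one [Fintype ι] [DecidableEq ι]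
    (P : Matrix n n K) (H : Matrix m n K) (R : Matrix m m K) :
    kalmanCovUpdate (P ⊗ₖ (1 : Matrix ι ι K)) (H ⊗ₖ (1 : Matrix ι ι K)) (R ⊗ₖ 1) =
      kalmanCovUpdate P H R ⊗ₖ 1 := by
  have hHt : (H ⊗ₖ (1 : Matrix ι ι K))ᵀ = Hᵀ ⊗ₖ 1 := by
    rw [← kroneckerMap_transpose, transpose_one]
  simp only [kalmanCovUpdate, hHt, ← mul_kronecker_mul, ← add_kronecker, inv_kronecker, inv_one,
    sub_kronecker, Matrix.mul_one]

theorem kalmanCovUpdate_replicateRow [Unique ι] [DecidableEq ι] (P : Matrix n n K) (μ : n → K)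
    (η : K) :
    kalmanCovUpdate P (replicateRow ι μ) (η • 1) =
      P - (μ ⬝ᵥ P *ᵥ μ + η)⁻¹ • (P * vecMulVec μ μ * P) := by
  rw [kalmanCovUpdate, transpose_replicateRow, replicateRow_mul_mul_replicateCol, ← add_smul,
    inv_smul_one, Matrix.mul_smul, Matrix.mul_one, Matrix.smul_mul, Matrix.smul_mul,
    vecMulVec_eq ι, Matrix.mul_assoc P]

end Kalman

theorem kalman_covariance_update_kronecker_general {d r : ℕ}
    (V : Matrix (Fin r) (Fin r) ℝ) (μ : Fin r → ℝ) (η : ℝ) :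
    (V ⊗ₖ (1 : Matrix (Fin d) (Fin d) ℝ)) -
        (V ⊗ₖ (1 : Matrix (Fin d) (Fin d) ℝ)) * (Matrix.replicateRow Unit μ ⊗ₖ (1 : Matrix (Fin d) (Fin d) ℝ))ᵀ *
          ((Matrix.replicateRow Unit μ ⊗ₖ (1 : Matrix (Fin d) (Fin d) ℝ)) * (V ⊗ₖ (1 : Matrix (Fin d) (Fin d) ℝ)) *
              (Matrix.replicateRow Unit μ ⊗ₖ (1 : Matrix (Fin d) (Fin d) ℝ))ᵀ + η • (1 : Matrix (Unit × Fin d) (Unit × Fin d) ℝ))⁻¹ *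
          (Matrix.replicateRow Unit μ ⊗ₖ (1 : Matrix (Fin d) (Fin d) ℝ)) * (V ⊗ₖ (1 : Matrix (Fin d) (Fin d) ℝ))
      = (V - (μ ⬝ᵥ V.mulVec μ + η)⁻¹ • (V * vecMulVec μ μ * V)) ⊗ₖ 1 := by
  have hR : η • (1 : Matrix (Unit × Fin d) (Unit × Fin d) ℝ) =
      (η • 1 : Matrix Unit Unit ℝ) ⊗ₖ 1 := by
    rw [smul_kronecker, one_kronecker_one]
  rw [hR, ← kalmanCovUpdate_replicateRow (ι := Unit), ← kalmanCovUpdate_kronecker_one]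
  rfl

/-- The Kalman covariance update with observation matrix `H = μᵀ ⊗ I_d` and isotropic noise
`η I_d` preserves the Kronecker-with-identity structure:
`(V⊗I) − (V⊗I)Hᵀ[H(V⊗I)Hᵀ + η I]⁻¹ H(V⊗I) = (V − VμμᵀV/(μᵀVμ + η)) ⊗ I`. -/
theorem kalman_covariance_update_kronecker {d r : ℕ}
    (V : Matrix (Fin r) (Fin r) ℝ) (hV : V.IsSymm) (μ : Fin r → ℝ) (η : ℝ)
    (hη : 0 < η) (hρ : μ ⬝ᵥ V.mulVec μ + η ≠ 0) :
    (V ⊗ₖ (1 : Matrix (Fin d) (Fin d) ℝ)) -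
        (V ⊗ₖ (1 : Matrix (Fin d) (Fin d) ℝ)) * (Matrix.replicateRow Unit μ ⊗ₖ (1 : Matrix (Fin d) (Fin d) ℝ))ᵀ *
          ((Matrix.replicateRow Unit μ ⊗ₖ (1 : Matrix (Fin d) (Fin d) ℝ)) * (V ⊗ₖ (1 : Matrix (Fin d) (Fin d) ℝ)) *
              (Matrix.replicateRow Unit μ ⊗ₖ (1 : Matrix (Fin d) (Fin d) ℝ))ᵀ + η • (1 : Matrix (Unit × Fin d) (Unit × Fin d) ℝ))⁻¹ *
          (Matrix.replicateRow Unit μ ⊗ₖ (1 : Matrix (Fin d) (Fin d) ℝ)) * (V ⊗ₖ (1 : Matrix (Fin d) (Fin d) ℝ))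
      = (V - (μ ⬝ᵥ V.mulVec μ + η)⁻¹ • (V * vecMulVec μ μ * V)) ⊗ₖ 1 :=
  kalman_covariance_update_kronecker_general V μ η
end

section
/- Let C₀ be a d×r matrix with c₀ = vec(C₀), V an r×r symmetric matrix, μ an r-vector, η > 0 with ρ := μᵀVμ + η ≠ 0, and y a d-vector. Then the Kalman mean update c₁ = c₀ + (V⊗I_d)Hᵀ[H(V⊗I_d)Hᵀ + η I_d]⁻¹(y − H c₀), with H = μᵀ ⊗ I_d, satisfies c₁ = vec(C₁) where C₁ = C₀ + (y − C₀μ) μᵀ Vᵀ / ρ. -/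
/-!
With `H = μᵀ ⊗ I_d`, the innovation covariance `H (V ⊗ I_d) Hᵀ + η I_d` collapses to the scalar
matrix `ρ I_d`, so the gain is `ρ⁻¹ (V ⊗ I_d) Hᵀ`. The identity `(B ⊗ A) vec X = vec (A X Bᵀ)`
turns every Kronecker product acting on a vectorized matrix into a matrix product: the
innovation is `vec (y − C₀μ)` and the gain maps it to `ρ⁻¹ vec ((y − C₀μ) μᵀ Vᵀ)`, where
`μᵀ Vᵀ = (Vμ)ᵀ`.
-/

open Matrix Kronecker

/-- Column-stacking vectorization of a matrix: `vec M (j, i) = M i j`. -/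
def vec {m n R : Type*} (M : Matrix m n R) : n × m → R := fun p => M p.2 p.1

theorem vec_eq_matrix_vec {m n R : Type*} (M : Matrix m n R) : _root_.vec M = M.vec := rfl

namespace Matrix

variable {R l m n : Type*} [Fintype m] [Fintype n] [DecidableEq m]

theorem inv_smul_one_of_ne_zero {K : Type*} [Field K] {c : K} (hc : c ≠ 0) :
    (c • (1 : Matrix m m K))⁻¹ = c⁻¹ • 1 :=
  inv_eq_right_inv <| by rw [smul_mul_smul_comm, Matrix.one_mul, mul_inv_cancel₀ hc, one_smul]

variable [CommSemiring R]

theorem kronecker_one_mul_mul_transpose (A : Matrix l n R) (B : Matrix n n R) :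
    (A ⊗ₖ (1 : Matrix m m R)) * (B ⊗ₖ (1 : Matrix m m R)) * (A ⊗ₖ (1 : Matrix m m R))ᵀ =
      (A * B * Aᵀ) ⊗ₖ (1 : Matrix m m R) := by
  rw [← kroneckerMap_transpose, transpose_one, ← mul_kronecker_mul, ← mul_kronecker_mul,
    Matrix.one_mul, Matrix.one_mul]

theorem replicateRow_mul_mul_transpose_replicateRow (μ : n → R) (V : Matrix n n R) :
    replicateRow Unit μ * V * (replicateRow Unit μ)ᵀ = (μ ⬝ᵥ V *ᵥ μ) • 1 := by
  rw [transpose_replicateRow, Matrix.mul_assoc, ← replicateCol_mulVec,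
    replicateRow_mul_replicateCol]
  ext
  simp

theorem replicateRow_kronecker_one_mulVec_vec (μ : n → R) (C : Matrix m n R) :
    (replicateRow Unit μ ⊗ₖ (1 : Matrix m m R)) *ᵥ vec C = vec (replicateCol Unit (C *ᵥ μ)) := by
  rw [kronecker_mulVec_vec, Matrix.one_mul, transpose_replicateRow, replicateCol_mulVec]

theorem kronecker_one_mul_transpose_replicateRow_mulVec_vec (V : Matrix n n R) (μ : n → R)
    (e : m → R) :
    ((V ⊗ₖ (1 : Matrix m m R)) * (replicateRow Unit μ ⊗ₖ (1 : Matrix m m R))ᵀ) *ᵥ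
        vec (replicateCol Unit e) = vec (vecMulVec e (V *ᵥ μ)) := by
  rw [← mulVec_mulVec, ← kroneckerMap_transpose, transpose_one, kronecker_mulVec_vec,
    kronecker_mulVec_vec, Matrix.one_mul, Matrix.one_mul, transpose_transpose, Matrix.mul_assoc,
    ← replicateRow_vecMul, vecMul_transpose, vecMulVec_eq Unit]

end Matrix

theorem kalman_mean_update_matrix_form_general {d r : ℕ}
    (C₀ : Matrix (Fin d) (Fin r) ℝ) (V : Matrix (Fin r) (Fin r) ℝ)
    (μ : Fin r → ℝ) (η : ℝ) (y : Fin d → ℝ)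
    (hρ : μ ⬝ᵥ V.mulVec μ + η ≠ 0) :
    _root_.vec C₀ +
        ((V ⊗ₖ (1 : Matrix (Fin d) (Fin d) ℝ)) *
            (Matrix.replicateRow Unit μ ⊗ₖ (1 : Matrix (Fin d) (Fin d) ℝ))ᵀ *
            ((Matrix.replicateRow Unit μ ⊗ₖ (1 : Matrix (Fin d) (Fin d) ℝ)) * (V ⊗ₖ (1 : Matrix (Fin d) (Fin d) ℝ)) *
                (Matrix.replicateRow Unit μ ⊗ₖ (1 : Matrix (Fin d) (Fin d) ℝ))ᵀ + η • (1 : Matrix (Unit × Fin d) (Unit × Fin d) ℝ))⁻¹).mulVec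
          ((fun p : Unit × Fin d => y p.2) -
            (Matrix.replicateRow Unit μ ⊗ₖ (1 : Matrix (Fin d) (Fin d) ℝ)).mulVec (_root_.vec C₀))
      = _root_.vec (C₀ + (μ ⬝ᵥ V.mulVec μ + η)⁻¹ • vecMulVec (y - C₀.mulVec μ) (V.mulVec μ)) := by
  have innovation_cov :
      (replicateRow Unit μ ⊗ₖ (1 : Matrix (Fin d) (Fin d) ℝ)) *
            (V ⊗ₖ (1 : Matrix (Fin d) (Fin d) ℝ)) *
            (replicateRow Unit μ ⊗ₖ (1 : Matrix (Fin d) (Fin d) ℝ))ᵀ + η • 1 =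
        (μ ⬝ᵥ V *ᵥ μ + η) • (1 : Matrix (Unit × Fin d) (Unit × Fin d) ℝ) := by
    rw [kronecker_one_mul_mul_transpose, replicateRow_mul_mul_transpose_replicateRow,
      smul_kronecker, one_kronecker_one, add_smul]
  have innovation : (fun p : Unit × Fin d => y p.2) -
        (replicateRow Unit μ ⊗ₖ (1 : Matrix (Fin d) (Fin d) ℝ)) *ᵥ C₀.vec =
      (replicateCol Unit (y - C₀ *ᵥ μ)).vec := by
    rw [replicateRow_kronecker_one_mulVec_vec]
    rfl
  simp only [vec_eq_matrix_vec]
  rw [innovation_cov, inv_smul_one_of_ne_zero hρ, Matrix.mul_smul, Matrix.mul_one, smul_mulVec,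
    innovation, kronecker_one_mul_transpose_replicateRow_mulVec_vec, vec_add, vec_smul]

/-- The Kalman mean update for the dictionary, in vectorized form, equals the vectorization of
the matrix-form update `C₁ = C₀ + (y − C₀μ) μᵀ Vᵀ / ρ`, where `ρ = μᵀVμ + η`. -/
theorem kalman_mean_update_matrix_form {d r : ℕ}
    (C₀ : Matrix (Fin d) (Fin r) ℝ) (V : Matrix (Fin r) (Fin r) ℝ) (hV : V.IsSymm)
    (μ : Fin r → ℝ) (η : ℝ) (hη : 0 < η) (y : Fin d → ℝ)
    (hρ : μ ⬝ᵥ V.mulVec μ + η ≠ 0) :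
    _root_.vec C₀ +
        ((V ⊗ₖ (1 : Matrix (Fin d) (Fin d) ℝ)) *
            (Matrix.replicateRow Unit μ ⊗ₖ (1 : Matrix (Fin d) (Fin d) ℝ))ᵀ *
            ((Matrix.replicateRow Unit μ ⊗ₖ (1 : Matrix (Fin d) (Fin d) ℝ)) * (V ⊗ₖ (1 : Matrix (Fin d) (Fin d) ℝ)) *
                (Matrix.replicateRow Unit μ ⊗ₖ (1 : Matrix (Fin d) (Fin d) ℝ))ᵀ + η • (1 : Matrix (Unit × Fin d) (Unit × Fin d) ℝ))⁻¹).mulVec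
          ((fun p : Unit × Fin d => y p.2) -
            (Matrix.replicateRow Unit μ ⊗ₖ (1 : Matrix (Fin d) (Fin d) ℝ)).mulVec (_root_.vec C₀))
      = _root_.vec (C₀ + (μ ⬝ᵥ V.mulVec μ + η)⁻¹ • vecMulVec (y - C₀.mulVec μ) (V.mulVec μ)) :=
  kalman_mean_update_matrix_form_general C₀ V μ η y hρ
end
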